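/- arXiv:1810.08971 — 9 statements merged into one kernel-verified Lean document; each statement's English description precedes it below -/
import Mathlib

section
/- Let α be an r-cycle in S_n. For any two points x_i and x_j in the support of α, there exists an involution ω in S_n such that ω conjugates α to α⁻¹, ω maps x_i to x_j, and the support of ω is contained in the support of α. -/
/-!
Write the cycle of `α` through `x` as `k ↦ αᵏ x` and reflect it: `αᵏ x ↦ α^(m - k) x`, with
every point outside that cycle fixed. Choosing `m` with `αᵐ x = y`, this reflection is an involution
sending `x` to `y`, it moves only points of the cycle, and it reverses the direction of the
cycle, i.e. conjugates `α` to `α⁻¹`.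
-/

namespace Equiv.Perm

variable {β : Type*} (α : Perm β) (x : β) (m : ℤ)

/-- The exponent chosen for `z` is determined only up to the order of `α`; the result does not
depend on the choice (`cycleReflectionFun_zpow_apply`). -/
noncomputable def cycleReflectionFun (z : β) : β :=
  open Classical in
  if h : α.SameCycle x z then (α ^ (m - h.choose)) x else z

theorem cycleReflectionFun_zpow_apply (k : ℤ) :
    cycleReflectionFun α x m ((α ^ k) x) = (α ^ (m - k)) x := by
  have h : α.SameCycle x ((α ^ k) x) := ⟨k, rfl⟩
  rw [cycleReflectionFun, dif_pos h]
  have hl : (α ^ h.choose) x = (α ^ k) x := h.choose_spec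
  generalize h.choose = l at hl ⊢
  have hx : (α ^ (k - l)) x = x := by
    rw [sub_eq_neg_add, zpow_add, mul_apply, ← hl, ← mul_apply, ← zpow_add, neg_add_cancel,
      zpow_zero, one_apply]
  rw [show m - l = (m - k) + (k - l) by ring, zpow_add, mul_apply, hx]

theorem cycleReflectionFun_of_not_sameCycle {z : β} (h : ¬α.SameCycle x z) :
    cycleReflectionFun α x m z = z := by
  rw [cycleReflectionFun, dif_neg h]

theorem cycleReflectionFun_involutive : Function.Involutive (cycleReflectionFun α x m) := by
  intro z
  by_cases h : α.SameCycle x z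
  · obtain ⟨k, rfl⟩ := h
    rw [cycleReflectionFun_zpow_apply, cycleReflectionFun_zpow_apply, sub_sub_cancel]
  · rw [cycleReflectionFun_of_not_sameCycle α x m h, cycleReflectionFun_of_not_sameCycle α x m h]

noncomputable def cycleReflection : Perm β :=
  (cycleReflectionFun_involutive α x m).toPerm _

theorem cycleReflection_zpow_apply (k : ℤ) :
    cycleReflection α x m ((α ^ k) x) = (α ^ (m - k)) x :=
  cycleReflectionFun_zpow_apply α x m k

theorem cycleReflection_apply_self : cycleReflection α x m x = (α ^ m) x := by
  simpa using cycleReflection_zpow_apply α x m 0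

theorem cycleReflection_of_not_sameCycle {z : β} (h : ¬α.SameCycle x z) :
    cycleReflection α x m z = z :=
  cycleReflectionFun_of_not_sameCycle α x m h

theorem cycleReflection_mul_self : cycleReflection α x m * cycleReflection α x m = 1 :=
  Equiv.ext (cycleReflectionFun_involutive α x m)

theorem cycleReflection_inv : (cycleReflection α x m)⁻¹ = cycleReflection α x m :=
  inv_eq_of_mul_eq_one_left (cycleReflection_mul_self α x m)

theorem cycleReflection_apply_of_sameCycle {z : β} (h : α.SameCycle x z) :
    cycleReflection α x m (α z) = α⁻¹ (cycleReflection α x m z) := by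
  obtain ⟨k, rfl⟩ := h
  have hstep : ∀ j : ℤ, α ((α ^ j) x) = (α ^ (j + 1)) x := fun j => by
    rw [add_comm, zpow_one_add, mul_apply]
  have hstep_inv : ∀ j : ℤ, α⁻¹ ((α ^ j) x) = (α ^ (j - 1)) x := fun j => by
    rw [sub_eq_neg_add, zpow_add, zpow_neg_one, mul_apply]
  rw [hstep, cycleReflection_zpow_apply, cycleReflection_zpow_apply, hstep_inv,
    sub_add_eq_sub_sub]

theorem support_cycleReflection_subset [Fintype β] [DecidableEq β] :
    (cycleReflection α x m).support ⊆ α.support := by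
  intro z hz
  rw [mem_support] at hz ⊢
  intro hfix
  by_cases h : α.SameCycle x z
  · obtain rfl := h.eq_of_right hfix
    apply hz
    rw [cycleReflection_apply_self, zpow_apply_eq_self_of_apply_eq_self hfix]
  · exact hz (cycleReflection_of_not_sameCycle α x m h)

variable {α x}

theorem IsCycle.cycleReflection_mul (hα : α.IsCycle) (hx : α x ≠ x) :
    cycleReflection α x m * α = α⁻¹ * cycleReflection α x m := by
  ext z
  by_cases h : α.SameCycle x z
  · exact cycleReflection_apply_of_sameCycle α x m h
  · have hz : α z = z := by_contra fun hz => h (hα.sameCycle hx hz)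
    have hz' : α⁻¹ z = z := by rw [inv_eq_iff_eq, hz]
    simp only [mul_apply, hz, cycleReflection_of_not_sameCycle α x m h, hz']

theorem IsCycle.inv_cycleReflection_mul_mul (hα : α.IsCycle) (hx : α x ≠ x) :
    (cycleReflection α x m)⁻¹ * α * cycleReflection α x m = α⁻¹ := by
  rw [cycleReflection_inv, hα.cycleReflection_mul m hx, mul_assoc, cycleReflection_mul_self,
    mul_one]

end Equiv.Perm

theorem stmt_1_general {n : ℕ} (α : Equiv.Perm (Fin n)) (hα : α.IsCycle)
    (x y : Fin n) (hx : x ∈ α.support) (hy : y ∈ α.support) :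
    ∃ ω : Equiv.Perm (Fin n), ω * ω = 1 ∧ ω⁻¹ * α * ω = α⁻¹ ∧ ω x = y ∧
      ω.support ⊆ α.support := by
  have hαx : α x ≠ x := Equiv.Perm.mem_support.mp hx
  obtain ⟨m, hm⟩ := hα.sameCycle hαx (Equiv.Perm.mem_support.mp hy)
  exact ⟨α.cycleReflection x m, α.cycleReflection_mul_self x m,
    hα.inv_cycleReflection_mul_mul m hαx, (α.cycleReflection_apply_self x m).trans hm,
    α.support_cycleReflection_subset x m⟩

/-- Lemma 2.1 (ii): for an r-cycle α and any points x, y moved by α, there is an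
involution ω with α^ω = α⁻¹, ω mapping x to y, and support of ω inside support of α. -/
theorem stmt_1 {n r : ℕ} (α : Equiv.Perm (Fin n)) (hα : α.IsCycle)
    (hr : α.support.card = r) (x y : Fin n) (hx : x ∈ α.support) (hy : y ∈ α.support) :
    ∃ ω : Equiv.Perm (Fin n), ω * ω = 1 ∧ ω⁻¹ * α * ω = α⁻¹ ∧ ω x = y ∧
      ω.support ⊆ α.support :=
  stmt_1_general α hα x y hx hy
end

section
/- Let α and β be two disjoint r-cycles in S_n. For any point x in the support of α and any point y in the support of β, there exists an involution ω such that ω conjugates α to β⁻¹ and β to α⁻¹, the support of ω is contained in the union of the supports of α and β, and ω swaps x and y. -/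
/-!
ω sends `(α ^ i) x` to `(β⁻¹ ^ i) y` and `(β ^ j) y` to `(α⁻¹ ^ j) x` and fixes every other point.
This is well defined because two cycles of the same length return to their base points at the same
times, namely at the multiples of that length. Such an ω is an involution swapping `x` and `y`, and
it intertwines `α` with `β⁻¹` and `β` with `α⁻¹` pointwise, which for an involution is exactly the
pair of conjugation identities.
-/

open Equiv Equiv.Perm Finset Function

namespace Equiv.Perm

variable {X : Type*} {α β : Perm X} {x y : X}

theorem toPerm_inv_mul_mul_toPerm {F : X → X} (hF : Involutive F) {σ τ : Perm X}
    (h : ∀ z, F (σ z) = τ (F z)) : (hF.toPerm F)⁻¹ * σ * hF.toPerm F = τ := by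
  ext z
  simp only [Perm.mul_apply, Perm.inv_def, Involutive.toPerm_symm, Involutive.coe_toPerm, h, hF z]

structure IsOrbitSwap (α β : Perm X) (x y : X) (F : X → X) : Prop where
  apply_zpow_left : ∀ i : ℤ, F ((α ^ i) x) = (β⁻¹ ^ i) y
  apply_zpow_right : ∀ j : ℤ, F ((β ^ j) y) = (α⁻¹ ^ j) x
  apply_of_fixed : ∀ z, α z = z → β z = z → F z = z

theorem IsOrbitSwap.symm {F : X → X} (h : IsOrbitSwap α β x y F) : IsOrbitSwap β α y x F :=
  ⟨h.apply_zpow_right, h.apply_zpow_left, fun z hβ hα => h.apply_of_fixed z hα hβ⟩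

theorem IsOrbitSwap.apply_apply_zpow_left {F : X → X} (h : IsOrbitSwap α β x y F) (i : ℤ) :
    F (F ((α ^ i) x)) = (α ^ i) x := by
  rw [h.apply_zpow_left, inv_zpow', h.apply_zpow_right, inv_zpow', neg_neg]

variable [DecidableEq X] [Fintype X]

theorem IsCycle.zpow_apply_eq_zpow_apply (hα : α.IsCycle) (hx : x ∈ α.support) {i j : ℤ} :
    (α ^ i) x = (α ^ j) x ↔ i ≡ j [ZMOD #α.support] :=
  (α.coe_support_eq_set_support ▸ hα.isCycleOn).zpow_apply_eq_zpow_apply hx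

theorem IsCycle.factorsThrough_zpow_apply (hα : α.IsCycle) (hβ : β.IsCycle)
    (hcard : #α.support = #β.support) (hx : x ∈ α.support) (hy : y ∈ β.support) :
    FactorsThrough (fun i : ℤ => (β ^ i) y) (fun i : ℤ => (α ^ i) x) := fun _ _ h =>
  (hβ.zpow_apply_eq_zpow_apply hy).2 (hcard ▸ (hα.zpow_apply_eq_zpow_apply hx).1 h)

namespace IsOrbitSwap

variable {F : X → X}

theorem involutive (h : IsOrbitSwap α β x y F) (hα : α.IsCycle) (hβ : β.IsCycle)
    (hx : x ∈ α.support) (hy : y ∈ β.support) : Involutive F := by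
  intro z
  by_cases hzα : z ∈ α.support
  · obtain ⟨i, rfl⟩ := hα.sameCycle (mem_support.1 hx) (mem_support.1 hzα)
    exact h.apply_apply_zpow_left i
  by_cases hzβ : z ∈ β.support
  · obtain ⟨j, rfl⟩ := hβ.sameCycle (mem_support.1 hy) (mem_support.1 hzβ)
    exact h.symm.apply_apply_zpow_left j
  have hz := h.apply_of_fixed z (notMem_support.1 hzα) (notMem_support.1 hzβ)
  rw [hz, hz]

theorem apply_left (h : IsOrbitSwap α β x y F) (hd : α.Disjoint β) (hα : α.IsCycle)
    (hβ : β.IsCycle) (hx : x ∈ α.support) (hy : y ∈ β.support) (z : X) :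
    F (α z) = β⁻¹ (F z) := by
  by_cases hzα : z ∈ α.support
  · obtain ⟨i, rfl⟩ := hα.sameCycle (mem_support.1 hx) (mem_support.1 hzα)
    rw [← mul_apply, ← zpow_one_add, h.apply_zpow_left, h.apply_zpow_left, zpow_one_add,
      mul_apply]
  rw [notMem_support.1 hzα]
  by_cases hzβ : z ∈ β.support
  · obtain ⟨j, rfl⟩ := hβ.sameCycle (mem_support.1 hy) (mem_support.1 hzβ)
    have hmem : (α⁻¹ ^ j) x ∈ α.support := by
      rw [inv_zpow']
      exact zpow_apply_mem_support.2 hx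
    rw [h.apply_zpow_right, notMem_support.1 (hd.inv_right.mem_imp hmem)]
  · rw [h.apply_of_fixed z (notMem_support.1 hzα) (notMem_support.1 hzβ),
      inv_eq_iff_eq.2 (notMem_support.1 hzβ).symm]

theorem support_subset {ω : Perm X} (h : IsOrbitSwap α β x y ω) :
    ω.support ⊆ α.support ∪ β.support := fun z hz => by
  by_contra hz'
  simp only [mem_union, not_or, notMem_support] at hz'
  exact mem_support.1 hz (h.apply_of_fixed z hz'.1 hz'.2)

end IsOrbitSwap

theorem exists_isOrbitSwap (hα : α.IsCycle) (hβ : β.IsCycle) (hcard : #α.support = #β.support)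
    (hd : α.Disjoint β) (hx : x ∈ α.support) (hy : y ∈ β.support) :
    ∃ F, IsOrbitSwap α β x y F := by
  have hxy := hα.factorsThrough_zpow_apply hβ.inv (by rwa [support_inv]) hx
    (by rwa [support_inv])
  have hyx := hβ.factorsThrough_zpow_apply hα.inv (by rw [support_inv, hcard]) hy
    (by rwa [support_inv])
  have hα_orbit (i : ℤ) : (α ^ i) x ∈ α.support := zpow_apply_mem_support.2 hx
  refine ⟨extend (fun i : ℤ => (α ^ i) x) (fun i => (β⁻¹ ^ i) y)
    (extend (fun j : ℤ => (β ^ j) y) (fun j => (α⁻¹ ^ j) x) id), ⟨hxy.extend_apply _, ?_, ?_⟩⟩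
  · intro j
    rw [extend_apply', hyx.extend_apply]
    rintro ⟨i, hi⟩
    exact hd.mem_imp (hα_orbit i) (hi ▸ zpow_apply_mem_support.2 hy)
  · intro z hzα hzβ
    rw [extend_apply', extend_apply', id]
    · rintro ⟨j, rfl⟩
      exact mem_support.1 (zpow_apply_mem_support.2 hy) hzβ
    · rintro ⟨i, rfl⟩
      exact mem_support.1 (hα_orbit i) hzα

end Equiv.Perm

/-- Lemma 2.1 (iii): for disjoint r-cycles α, β and points x ∈ M(α), y ∈ M(β),
there is an involution ω with α^ω = β⁻¹, β^ω = α⁻¹, M(ω) ⊆ M(α) ∪ M(β),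
and ω swapping x and y. -/
theorem stmt_2 {n r : ℕ} (α β : Equiv.Perm (Fin n)) (hα : α.IsCycle) (hβ : β.IsCycle)
    (hrα : α.support.card = r) (hrβ : β.support.card = r) (hd : α.Disjoint β)
    (x y : Fin n) (hx : x ∈ α.support) (hy : y ∈ β.support) :
    ∃ ω : Equiv.Perm (Fin n), ω * ω = 1 ∧ ω⁻¹ * α * ω = β⁻¹ ∧ ω⁻¹ * β * ω = α⁻¹ ∧
      ω.support ⊆ α.support ∪ β.support ∧ ω x = y ∧ ω y = x := by
  obtain ⟨F, hF⟩ := exists_isOrbitSwap hα hβ (hrα.trans hrβ.symm) hd hx hy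
  have hinv := hF.involutive hα hβ hx hy
  refine ⟨hinv.toPerm F, Perm.ext hinv,
    toPerm_inv_mul_mul_toPerm hinv (hF.apply_left hd hα hβ hx hy),
    toPerm_inv_mul_mul_toPerm hinv (hF.symm.apply_left hd.symm hβ hα hy hx),
    hF.support_subset, ?_, ?_⟩
  · simpa using hF.apply_zpow_left 0
  · simpa using hF.apply_zpow_right 0
end

section
/- Let α be a product of k disjoint r-cycles α_i = (x_{i1}, x_{i2}, ..., x_{ir}) for i = 1,...,k, and let β = (x_{11}, x_{21}, ..., x_{k1}) be the k-cycle on the first entries. Then for any permutation ω with β^ω = β⁻¹ and support of ω contained in the support of β, there exists a permutation ν with support contained in M(α) \ M(β) such that (ωúν) conjugates α to α⁻¹ and β to β⁻¹. -/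
/-! Since `M(ω) ⊆ M(β) ⊆ {x i 0}`, `ω` permutes the first entries: `ω (x i 0) = x (e i) 0` for a
permutation `e` of the cycle indices. Transported along `(i, j) ↦ x i j`, `α` is the translation
`(i, j) ↦ (i, j + 1)` of `Fin k × Fin r`, which `(i, j) ↦ (e i, -j)` conjugates to its inverse; let
`τ` be the transported conjugator. `τ` agrees with `ω` on the first entries and off the points
`x i j`, so `ν = ω⁻¹ τ` lives on `M(α) \ M(β)`. Then `ω ν = τ` inverts `α`, and `ν`, being disjoint
from `β`, commutes with it, so `ω ν` inverts `β` as `ω` does. -/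

open Equiv Equiv.Perm Function

theorem List.formPerm_ofFn_apply {X : Type*} [DecidableEq X] {r : ℕ} [NeZero r]
    {x : Fin r → X} (hx : Injective x) (j : Fin r) :
    (List.ofFn x).formPerm (x j) = x (j + 1) := by
  have h := List.formPerm_apply_getElem (List.ofFn x) (List.nodup_ofFn.mpr hx) j (by simp)
  simp only [List.getElem_ofFn, Fin.eta, List.length_ofFn] at h
  rw [h]
  congr 1
  ext
  simp [Fin.val_add]

theorem Equiv.Perm.list_prod_apply_eq_self {X : Type*} {l : List (Perm X)} {y : X}
    (h : ∀ σ ∈ l, σ y = y) : l.prod y = y :=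
  MulAction.mem_stabilizer_iff.mp <|
    list_prod_mem fun σ hσ => MulAction.mem_stabilizer_iff.mpr (h σ hσ)

theorem Equiv.Perm.viaEmbedding_inv {α β : Type*} (e : Perm α) (ι : α ↪ β) :
    e⁻¹.viaEmbedding ι = (e.viaEmbedding ι)⁻¹ :=
  map_inv (viaEmbeddingHom ι) e

theorem Equiv.Perm.viaEmbedding_conj {α β : Type*} (e a : Perm α) (ι : α ↪ β) :
    (e.viaEmbedding ι)⁻¹ * a.viaEmbedding ι * e.viaEmbedding ι = (e⁻¹ * a * e).viaEmbedding ι := by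
  simp only [← viaEmbeddingHom_apply, map_mul, map_inv]

theorem Equiv.prodCongr_neg_conj_addRight {κ G : Type*} [AddCommGroup G] (e : Perm κ) (g : G) :
    (prodCongr e (Equiv.neg G))⁻¹ * prodCongr (Equiv.refl κ) (Equiv.addRight g) *
      prodCongr e (Equiv.neg G) = (prodCongr (Equiv.refl κ) (Equiv.addRight g))⁻¹ := by
  rw [eq_inv_iff_mul_eq_one]
  ext ⟨i, j⟩ <;> simp [Perm.mul_apply]

theorem Equiv.Perm.exists_perm_apply_eq_of_support_subset_range {ι X : Type*} [Finite ι]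
    [Fintype X] [DecidableEq X] {g : ι → X} (hg : Injective g) {σ : Perm X}
    (hσ : (σ.support : Set X) ⊆ Set.range g) : ∃ e : Perm ι, ∀ i, g (e i) = σ (g i) := by
  have hmaps : ∀ i, σ (g i) ∈ Set.range g := fun i => by
    by_cases hi : g i ∈ σ.support
    · exact hσ (apply_mem_support.mpr hi)
    · exact ⟨i, (notMem_support.mp hi).symm⟩
  choose f hf using hmaps
  have hf_inj : Injective f := fun i i' h => hg (σ.injective (by rw [← hf, ← hf, h]))
  exact ⟨Equiv.ofBijective f (Finite.injective_iff_bijective.mp hf_inj), hf⟩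

section Grid

variable {X : Type*} [DecidableEq X] {k r : ℕ} {x : Fin k → Fin r → X}

theorem List.disjoint_formPerm_ofFn (hinj : Injective (uncurry x)) {i i' : Fin k} (h : i ≠ i') :
    Equiv.Perm.Disjoint (List.ofFn (x i)).formPerm (List.ofFn (x i')).formPerm := by
  intro y
  by_cases hy : y ∈ List.ofFn (x i)
  · right
    refine List.formPerm_apply_of_notMem fun hy' => h ?_
    obtain ⟨j, rfl⟩ := (List.mem_ofFn' _ _).mp hy
    obtain ⟨j', hj'⟩ := (List.mem_ofFn' _ _).mp hy'
    exact (congrArg Prod.fst (@hinj (i', j') (i, j) hj')).symm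
  · exact Or.inl (List.formPerm_apply_of_notMem hy)

theorem List.prod_ofFn_formPerm_eq_viaEmbedding [Fintype X] [NeZero r] (hr : 2 ≤ r)
    (hinj : Injective (uncurry x)) :
    (List.ofFn fun i => (List.ofFn (x i)).formPerm).prod =
      Equiv.Perm.viaEmbedding (prodCongr (Equiv.refl (Fin k)) (Equiv.addRight 1))
        ⟨uncurry x, hinj⟩ := by
  ext y
  by_cases hy : y ∈ Set.range (uncurry x)
  · obtain ⟨⟨i, j⟩, rfl⟩ := hy
    have hxi : Injective (x i) := fun j j' h => congrArg Prod.snd (@hinj (i, j) (i, j') h)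
    have hmoves : (List.ofFn (x i)).formPerm (x i j) ≠ x i j := by
      rw [List.formPerm_ofFn_apply hxi]
      exact fun h => absurd (hxi h) (by simp; omega)
    have hpair : (List.ofFn fun i => (List.ofFn (x i)).formPerm).Pairwise Equiv.Perm.Disjoint :=
      List.pairwise_ofFn.mpr fun i i' h => List.disjoint_formPerm_ofFn hinj h.ne
    rw [show uncurry x (i, j) = x i j from rfl,
      ← eq_on_support_mem_disjoint (List.mem_ofFn.mpr ⟨i, rfl⟩) hpair _ (mem_support.mpr hmoves),
      List.formPerm_ofFn_apply hxi]
    exact (viaEmbedding_apply (prodCongr (Equiv.refl _) (Equiv.addRight 1)) ⟨uncurry x, hinj⟩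
      (i, j)).symm
  · rw [viaEmbedding_apply_of_notMem _ ⟨uncurry x, hinj⟩ _ hy]
    refine Equiv.Perm.list_prod_apply_eq_self fun σ hσ => ?_
    obtain ⟨i, rfl⟩ := List.mem_ofFn.mp hσ
    refine List.formPerm_apply_of_notMem fun h => ?_
    obtain ⟨j, rfl⟩ := (List.mem_ofFn' _ _).mp h
    exact hy ⟨(i, j), rfl⟩

end Grid

theorem Equiv.Perm.support_inv_mul_viaEmbedding_prodCongr_neg_subset {κ G X : Type*} [AddGroup G]
    [Fintype X] [DecidableEq X] (ι : κ × G ↪ X) {e : Perm κ} {ω : Perm X}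
    (hω : (ω.support : Set X) ⊆ Set.range fun i => ι (i, 0))
    (he : ∀ i, ι (e i, 0) = ω (ι (i, 0))) :
    ((ω⁻¹ * viaEmbedding (prodCongr e (Equiv.neg G)) ι).support : Set X) ⊆ ι '' {p | p.2 ≠ 0} := by
  intro y hy
  by_contra hy'
  refine mem_support.mp hy ?_
  rw [mul_apply, inv_eq_iff_eq]
  by_cases hyι : y ∈ Set.range ι
  · obtain ⟨⟨i, j⟩, rfl⟩ := hyι
    obtain rfl : j = 0 := by_contra fun hj => hy' ⟨(i, j), hj, rfl⟩
    rw [viaEmbedding_apply, ← he]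
    simp
  · have hωy : ω y = y := notMem_support.mp fun h => by
      obtain ⟨i, rfl⟩ := hω h
      exact hyι ⟨(i, 0), rfl⟩
    rw [viaEmbedding_apply_of_notMem _ _ _ hyι, hωy]

/-- Corollary 2.2: α a product of k disjoint r-cycles on the points x i j,
β the k-cycle on the first entries x i 0.  For any ω with β^ω = β⁻¹ and
M(ω) ⊆ M(β), there is ν with M(ν) ⊆ M(α) \ M(β) such that ων conjugates
α to α⁻¹ and β to β⁻¹. -/
theorem stmt_3 {n k r : ℕ} (hr : 2 ≤ r)
    (x : Fin k → Fin r → Fin n)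
    (hinj : Function.Injective (fun p : Fin k × Fin r => x p.1 p.2))
    (α β : Equiv.Perm (Fin n))
    (hα : α = (List.ofFn (fun i : Fin k => (List.ofFn (x i)).formPerm)).prod)
    (hβ : β = (List.ofFn (fun i : Fin k => x i ⟨0, by omega⟩)).formPerm)
    (ω : Equiv.Perm (Fin n)) (hω1 : ω⁻¹ * β * ω = β⁻¹) (hω2 : ω.support ⊆ β.support) :
    ∃ ν : Equiv.Perm (Fin n), ν.support ⊆ α.support \ β.support ∧
      (ω * ν)⁻¹ * α * (ω * ν) = α⁻¹ ∧ (ω * ν)⁻¹ * β * (ω * ν) = β⁻¹ := by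
  have : NeZero r := ⟨by omega⟩
  let ι : Fin k × Fin r ↪ Fin n := ⟨uncurry x, hinj⟩
  have hα' := hα.trans (List.prod_ofFn_formPerm_eq_viaEmbedding hr hinj)
  have hβ_supp : (β.support : Set (Fin n)) ⊆ Set.range fun i => ι (i, 0) := by
    intro y hy
    rw [hβ] at hy
    exact (List.mem_ofFn' _ _).mp (List.mem_toFinset.mp (List.support_formPerm_le _ hy))
  have hω_supp := (Finset.coe_subset.mpr hω2).trans hβ_supp
  obtain ⟨e, he⟩ := exists_perm_apply_eq_of_support_subset_range
    (fun i i' h => congrArg Prod.fst (ι.injective h)) hω_supp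
  set τ := viaEmbedding (prodCongr e (Equiv.neg (Fin r))) ι
  have hν : (ω⁻¹ * τ).support ⊆ α.support \ β.support := by
    intro y hy
    obtain ⟨⟨i, j⟩, hj, rfl⟩ :=
      support_inv_mul_viaEmbedding_prodCongr_neg_subset ι hω_supp he hy
    refine Finset.mem_sdiff.mpr ⟨?_, fun hβy => ?_⟩
    · rw [Perm.mem_support, hα', viaEmbedding_apply]
      exact fun h => absurd (congrArg Prod.snd (ι.injective h)) (by simp; omega)
    · obtain ⟨i', hi'⟩ := hβ_supp hβy
      exact hj (congrArg Prod.snd (ι.injective hi')).symm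
  refine ⟨ω⁻¹ * τ, hν, ?_, ?_⟩
  · rw [mul_inv_cancel_left, hα', viaEmbedding_conj, prodCongr_neg_conj_addRight,
      viaEmbedding_inv]
  · have hcomm : Commute (ω⁻¹ * τ) β⁻¹ := (disjoint_iff_disjoint_support.mpr
      (Finset.disjoint_left.mpr fun y hy => (Finset.mem_sdiff.mp (hν hy)).2)).commute.inv_right
    calc (ω * (ω⁻¹ * τ))⁻¹ * β * (ω * (ω⁻¹ * τ))
        = (ω⁻¹ * τ)⁻¹ * (ω⁻¹ * β * ω) * (ω⁻¹ * τ) := by group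
      _ = β⁻¹ := by rw [hω1, mul_assoc, ← hcomm.eq, inv_mul_cancel_left]
end

section
/- Let α and β be permutations in S_n. If there exists a permutation μ ∈ S_n with α^μ = α⁻¹ and β^μ = β⁻¹, then there exists a permutation γ ∈ S_n with α^γ = α⁻¹, β^γ = β⁻¹, and the support of γ contained in M(α) ∪ M(β). -/
/-!
If `μ` inverts `α` and `β` by conjugation, it maps `M(α)` to `M(α⁻¹) = M(α)` and likewise for `β`,
so it permutes `M(α) ∪ M(β)`. Its restriction `γ` to that set, extended by the identity, still
inverts `α` and `β`: both sides of `γ⁻¹ α γ = α⁻¹` are permutations of `M(α) ∪ M(β)` extended by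
the identity, and on that set `γ` agrees with `μ`.
-/

namespace Equiv.Perm

variable {α : Type*}

theorem apply_mem_support_iff_of_conj_eq [Fintype α] [DecidableEq α] {μ σ τ : Perm α}
    (h : μ⁻¹ * σ * μ = τ) (x : α) : μ x ∈ σ.support ↔ x ∈ τ.support := by
  rw [mem_support, mem_support, ← h, mul_apply, mul_apply, Ne, Ne, inv_eq_iff_eq, eq_comm]

theorem apply_iff_of_forall_apply_ne_imp {p : α → Prop} {σ : Perm α}
    (hσ : ∀ x, σ x ≠ x → p x) (x : α) : p (σ x) ↔ p x := by
  by_cases hx : σ x = x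
  · rw [hx]
  · exact ⟨fun _ => hσ x hx, fun _ => hσ (σ x) (σ.injective.ne hx)⟩

theorem ofSubtype_subtypePerm_conj {p : α → Prop} [DecidablePred p] {μ σ τ : Perm α}
    (hμ : ∀ x, p (μ x) ↔ p x) (hσ : ∀ x, σ x ≠ x → p x) (hτ : ∀ x, τ x ≠ x → p x)
    (h : μ⁻¹ * σ * μ = τ) :
    (ofSubtype (μ.subtypePerm hμ))⁻¹ * σ * ofSubtype (μ.subtypePerm hμ) = τ := by
  calc _ = ofSubtype ((μ.subtypePerm hμ)⁻¹ * σ.subtypePerm _ * μ.subtypePerm hμ) := by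
        rw [map_mul, map_mul, map_inv,
          ofSubtype_subtypePerm (apply_iff_of_forall_apply_ne_imp hσ) hσ]
    _ = ofSubtype (τ.subtypePerm (apply_iff_of_forall_apply_ne_imp hτ)) := by
        congr 1
        ext x
        subst h
        rfl
    _ = τ := ofSubtype_subtypePerm _ hτ

end Equiv.Perm

open Equiv Equiv.Perm in
/-- Lemma 2.3: if some μ simultaneously conjugates α and β to their inverses,
then some γ does so with support inside M(α) ∪ M(β). -/
theorem stmt_4 {n : ℕ} (α β : Equiv.Perm (Fin n))
    (h : ∃ μ : Equiv.Perm (Fin n), μ⁻¹ * α * μ = α⁻¹ ∧ μ⁻¹ * β * μ = β⁻¹) :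
    ∃ γ : Equiv.Perm (Fin n), γ⁻¹ * α * γ = α⁻¹ ∧ γ⁻¹ * β * γ = β⁻¹ ∧
      γ.support ⊆ α.support ∪ β.support := by
  obtain ⟨μ, hα, hβ⟩ := h
  set p : Fin n → Prop := (· ∈ α.support ∪ β.support)
  have hμ : ∀ x, p (μ x) ↔ p x := fun x => by
    simp only [p, Finset.mem_union, apply_mem_support_iff_of_conj_eq hα,
      apply_mem_support_iff_of_conj_eq hβ, support_inv]
  have moved_α (x : Fin n) (hx : α x ≠ x) : p x := Finset.mem_union_left _ (mem_support.2 hx)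
  have moved_β (x : Fin n) (hx : β x ≠ x) : p x := Finset.mem_union_right _ (mem_support.2 hx)
  have moved_α_inv (x : Fin n) (hx : α⁻¹ x ≠ x) : p x :=
    Finset.mem_union_left _ (by rwa [← support_inv, mem_support])
  have moved_β_inv (x : Fin n) (hx : β⁻¹ x ≠ x) : p x :=
    Finset.mem_union_right _ (by rwa [← support_inv, mem_support])
  refine ⟨ofSubtype (μ.subtypePerm hμ), ofSubtype_subtypePerm_conj hμ moved_α moved_α_inv hα,
    ofSubtype_subtypePerm_conj hμ moved_β moved_β_inv hβ, fun x hx => ?_⟩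
  by_contra hpx
  exact mem_support.1 hx (ofSubtype_apply_of_not_mem _ hpx)
end

section
/- Let α, β ∈ S_n with αβ = βα. Then there exists γ ∈ S_n such that γ⁻¹αγ = α⁻¹ and γ⁻¹βγ = β⁻¹. -/
/-!
An abelian group `G` acting on a set acts on each orbit as on `G ⧸ H` for a stabiliser `H`, and
inversion `gH ↦ g⁻¹H` is well defined there because `H` is normal. Choosing a base point in every
orbit glues these inversions into an involution `γ` with `γ (g • x) = g⁻¹ • γ x`. Applied to the
abelian group generated by commuting permutations, this `γ` conjugates each of them to its
inverse.
-/

open Equiv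

open scoped IsMulCommutative

namespace MulAction

variable {G X : Type*} [CommGroup G] [MulAction G X]

theorem inv_smul_eq_inv_smul_of_smul_eq {a b : G} {x : X} (h : a • x = b • x) :
    a⁻¹ • x = b⁻¹ • x := by
  rw [inv_smul_eq_iff, smul_smul, mul_comm a, ← smul_smul, h, inv_smul_smul]

variable (G X) in
theorem exists_involutive_smul_eq_inv_smul :
    ∃ f : X → X, Function.Involutive f ∧ ∀ (g : G) (x : X), f (g • x) = g⁻¹ • f x := by
  let r : X → X := fun x => (Quotient.mk (orbitRel G X) x).out
  have hr_smul (g : G) (x : X) : r (g • x) = r x := by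
    simp only [r, Quotient.sound (s := orbitRel G X) (mem_orbit x g)]
  have hr_mem (x : X) : ∃ a : G, a • r x = x :=
    mem_orbit_symm.mp (Quotient.mk_out (s := orbitRel G X) x)
  choose c hc using hr_mem
  let f : X → X := fun x => (c x)⁻¹ • r x
  -- `f x` does not depend on the choice of `c x`
  have hf (x : X) {a : G} (ha : a • r x = x) : f x = a⁻¹ • r x :=
    inv_smul_eq_inv_smul_of_smul_eq ((hc x).trans ha.symm)
  have hr_f (x : X) : r (f x) = r x := by simp only [f, hr_smul, r, Quotient.out_eq]
  refine ⟨f, fun x => ?_, fun g x => ?_⟩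
  · rw [hf (f x) (a := (c x)⁻¹) (by rw [hr_f]), hr_f, inv_inv, hc]
  · rw [hf (g • x) (a := g * c x) (by rw [hr_smul, mul_smul, hc]), hr_smul, mul_inv, mul_smul]

end MulAction

theorem Equiv.Perm.exists_conj_eq_inv_of_commute {X : Type*} {S : Set (Perm X)}
    (hS : ∀ σ ∈ S, ∀ τ ∈ S, Commute σ τ) : ∃ γ : Perm X, ∀ σ ∈ S, γ⁻¹ * σ * γ = σ⁻¹ := by
  have := Subgroup.isMulCommutative_closure hS
  obtain ⟨f, hf_inv, hf⟩ := MulAction.exists_involutive_smul_eq_inv_smul (Subgroup.closure S) X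
  refine ⟨hf_inv.toPerm f, fun σ hσ => ?_⟩
  rw [mul_assoc, inv_mul_eq_iff_eq_mul]
  ext x
  simpa [Subgroup.smul_def] using (hf ⟨σ⁻¹, inv_mem (Subgroup.subset_closure hσ)⟩ x).symm

/-- Lemma 2.4 (Neftin): commuting permutations can be simultaneously conjugated
to their inverses. -/
theorem stmt_5 {n : ℕ} (α β : Equiv.Perm (Fin n)) (h : α * β = β * α) :
    ∃ γ : Equiv.Perm (Fin n), γ⁻¹ * α * γ = α⁻¹ ∧ γ⁻¹ * β * γ = β⁻¹ := by
  have hS : ∀ σ ∈ ({α, β} : Set (Perm (Fin n))), ∀ τ ∈ ({α, β} : Set (Perm (Fin n))),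
      Commute σ τ := by
    rintro σ (rfl | rfl) τ (rfl | rfl)
    exacts [Commute.refl _, h, h.symm, Commute.refl _]
  obtain ⟨γ, hγ⟩ := Perm.exists_conj_eq_inv_of_commute hS
  exact ⟨γ, hγ α (by simp), hγ β (by simp)⟩
end

section
/- Let α, β ∈ S_n such that the commutator [α,β] moves at most 4 points and at least 2 points, and suppose no cycle factor of α is mapped by conjugation by β to another cycle factor of α (i.e., β⁻¹α_jβ ∉ {α₁,...,α_s} for all j). Then α is a product of at most 3 disjoint nontrivial cycles. -/
open Equiv Equiv.Perm Finset

/-- Lemma 3.1: if [α,β] moves between 2 and 4 points and no cycle factor of α is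
conjugated by β onto a cycle factor of α, then α has at most 3 cycle factors. -/
theorem stmt_9 {n : ℕ} (α β : Equiv.Perm (Fin n))
    (h1 : 2 ≤ (α⁻¹ * β⁻¹ * α * β).support.card)
    (h2 : (α⁻¹ * β⁻¹ * α * β).support.card ≤ 4)
    (h3 : ∀ c ∈ α.cycleFactorsFinset, β⁻¹ * c * β ∉ α.cycleFactorsFinset) :
    α.cycleFactorsFinset.card ≤ 3 := by
  set γ : Perm (Fin n) := α⁻¹ * β⁻¹ * α * β with hγdef
  set δ : Perm (Fin n) := β⁻¹ * α * β with hδdef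
  set S : Finset (Fin n) := γ.support with hSdef
  have hδγ : δ = α * γ := by rw [hγdef, hδdef]; group
  have hsame : ∀ a : Fin n, a ∉ S → δ a = α a := by
    intro a ha
    rw [hδγ]
    simp [Perm.mul_apply, Equiv.Perm.notMem_support.mp ha]
  -- key : nothing is simultaneously a cycle factor of α and of δ
  have hkey : ∀ d : Perm (Fin n), d ∈ α.cycleFactorsFinset →
      d ∈ δ.cycleFactorsFinset → False := by
    intro d hdF hdδ
    have h1 : β⁻¹ * (β * d * β⁻¹) * (β⁻¹)⁻¹ ∈ (β⁻¹ * α * (β⁻¹)⁻¹).cycleFactorsFinset := by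
      have : β⁻¹ * (β * d * β⁻¹) * (β⁻¹)⁻¹ = d := by group
      rw [this]
      simpa using hdδ
    have h2 : β * d * β⁻¹ ∈ α.cycleFactorsFinset :=
      (Equiv.Perm.mem_cycleFactorsFinset_conj α β⁻¹ (β * d * β⁻¹)).mp h1
    have := h3 _ h2
    apply this
    have : β⁻¹ * (β * d * β⁻¹) * β = d := by group
    rw [this]; exact hdF
  -- any cycle factor of α whose support misses S would be a cycle factor of δ
  have hmeetα : ∀ c ∈ α.cycleFactorsFinset, (c.support ∩ S).Nonempty := by
    intro c hc
    by_contra hne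
    rw [Finset.not_nonempty_iff_eq_empty, ← Finset.disjoint_iff_inter_eq_empty] at hne
    apply hkey c hc
    rw [Equiv.Perm.mem_cycleFactorsFinset_iff] at hc ⊢
    refine ⟨hc.1, fun a ha => ?_⟩
    rw [hc.2 a ha, hsame a (Finset.disjoint_left.mp hne ha)]
  have hmeetδ : ∀ d ∈ δ.cycleFactorsFinset, (d.support ∩ S).Nonempty := by
    intro d hd
    by_contra hne
    rw [Finset.not_nonempty_iff_eq_empty, ← Finset.disjoint_iff_inter_eq_empty] at hne
    apply hkey d _ hd
    rw [Equiv.Perm.mem_cycleFactorsFinset_iff] at hd ⊢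
    refine ⟨hd.1, fun a ha => ?_⟩
    rw [hd.2 a ha, ← hsame a (Finset.disjoint_left.mp hne ha)]
  -- cardinality of δ's factors equals that of α's
  have hcardeq : δ.cycleFactorsFinset.card = α.cycleFactorsFinset.card := by
    have h' : δ = ConjAct.toConjAct β⁻¹ • α := by
      rw [ConjAct.smul_def, ConjAct.ofConjAct_toConjAct, inv_inv, hδdef]
    rw [h', Equiv.Perm.cycleFactorsFinset_conj, Finset.card_map]
  -- generic sum bound for factors of any permutation
  have hsumle : ∀ σ : Perm (Fin n),
      ∑ c ∈ σ.cycleFactorsFinset, (c.support ∩ S).card ≤ S.card := by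
    intro σ
    rw [← Finset.card_biUnion]
    · apply Finset.card_le_card
      intro x hx
      simp only [Finset.mem_biUnion] at hx
      obtain ⟨c, _, hc⟩ := hx
      exact (Finset.mem_inter.mp hc).2
    · intro x hx y hy hxy
      have hd := Equiv.Perm.cycleFactorsFinset_pairwise_disjoint σ hx hy hxy
      exact (Equiv.Perm.Disjoint.disjoint_support hd).mono
        Finset.inter_subset_left Finset.inter_subset_left
  by_contra hcon
  push_neg at hcon
  have hF4 : α.cycleFactorsFinset.card = 4 := by
    have hle := hsumle α
    have hge : α.cycleFactorsFinset.card ≤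
        ∑ c ∈ α.cycleFactorsFinset, (c.support ∩ S).card := by
      calc α.cycleFactorsFinset.card = ∑ c ∈ α.cycleFactorsFinset, 1 := by simp
        _ ≤ _ := Finset.sum_le_sum fun c hc => Finset.card_pos.mpr (hmeetα c hc)
    omega
  -- each factor of α meets S in exactly one point
  have hone : ∀ c ∈ α.cycleFactorsFinset, (c.support ∩ S).card = 1 := by
    intro c hc
    by_contra hne
    have h2le : 2 ≤ (c.support ∩ S).card := by
      have := Finset.card_pos.mpr (hmeetα c hc); omega
    have hlt : ∑ d ∈ α.cycleFactorsFinset, 1 <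
        ∑ d ∈ α.cycleFactorsFinset, (d.support ∩ S).card :=
      Finset.sum_lt_sum (fun d hd => Finset.card_pos.mpr (hmeetα d hd)) ⟨c, hc, by omega⟩
    have := hsumle α
    simp only [Finset.sum_const, smul_eq_mul, mul_one] at hlt
    omega
  -- S is covered by supports of factors of α
  have hcover : ∀ y ∈ S, ∃ c ∈ α.cycleFactorsFinset, y ∈ c.support := by
    intro y hy
    by_contra hnc
    push_neg at hnc
    -- then the biUnion is a subset of S \ {y}, but its card is 4 ≥ card S
    have hsub : α.cycleFactorsFinset.biUnion (fun c => c.support ∩ S) ⊆ S.erase y := by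
      intro x hx
      simp only [Finset.mem_biUnion] at hx
      obtain ⟨c, hc, hxc⟩ := hx
      rw [Finset.mem_inter] at hxc
      refine Finset.mem_erase.mpr ⟨fun h => hnc c hc (h ▸ hxc.1), hxc.2⟩
    have hbcard : (α.cycleFactorsFinset.biUnion (fun c => c.support ∩ S)).card = 4 := by
      rw [Finset.card_biUnion]
      · rw [Finset.sum_congr rfl hone]; simp [hF4]
      · intro x hx y' hy' hxy
        have hd := Equiv.Perm.cycleFactorsFinset_pairwise_disjoint α hx hy' hxy
        exact (Equiv.Perm.Disjoint.disjoint_support hd).mono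
          Finset.inter_subset_left Finset.inter_subset_left
    have := Finset.card_le_card hsub
    have := Finset.card_erase_le (a := y) (s := S)
    have hyS : (S.erase y).card < S.card := Finset.card_erase_lt_of_mem hy
    omega
  -- pick a point y ∈ S
  obtain ⟨y, hy⟩ : S.Nonempty := Finset.card_pos.mp (by omega)
  set x : Fin n := γ y with hxdef
  have hxS : x ∈ S := by
    show γ y ∈ γ.support
    rw [Equiv.Perm.apply_mem_support]; exact hy
  have hxy : x ≠ y := by
    intro h
    rw [hxdef] at h
    exact (Equiv.Perm.mem_support.mp hy) h
  obtain ⟨c, hcF, hxc⟩ := hcover x hxS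
  have hcsing : c.support ∩ S = {x} := by
    apply Finset.eq_singleton_iff_unique_mem.mpr
    refine ⟨Finset.mem_inter.mpr ⟨hxc, hxS⟩, fun z hz => ?_⟩
    have h1 := hone c hcF
    rw [Finset.card_eq_one] at h1
    obtain ⟨a, ha⟩ := h1
    rw [ha] at hz
    have : x ∈ ({a} : Finset (Fin n)) := by
      rw [← ha]; exact Finset.mem_inter.mpr ⟨hxc, hxS⟩
    simp only [Finset.mem_singleton] at hz this
    rw [hz, this]
  have hcx : c x = α x := (Equiv.Perm.mem_cycleFactorsFinset_iff.mp hcF).2 x hxc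
  have hxsuppα : x ∈ α.support := by
    rw [Equiv.Perm.mem_support, ← hcx]
    exact Equiv.Perm.mem_support.mp hxc
  have hceq : c = α.cycleOf x := Equiv.Perm.cycle_is_cycleOf hxc hcF
  -- the orbit of x under α stays out of S except at x
  have horb : ∀ t : ℕ, (α ^ t) x ∈ S → (α ^ t) x = x := by
    intro t ht
    have hmem : (α ^ t) x ∈ c.support := by
      rw [hceq, Equiv.Perm.mem_support_cycleOf_iff]
      exact ⟨⟨(t : ℤ), by simp⟩, hxsuppα⟩
    have : (α ^ t) x ∈ c.support ∩ S := Finset.mem_inter.mpr ⟨hmem, ht⟩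
    rw [hcsing] at this
    exact Finset.mem_singleton.mp this
  -- find the return time m
  have hex : ∃ m : ℕ, 0 < m ∧ (α ^ m) x = x := by
    refine ⟨orderOf α, ?_, ?_⟩
    · exact orderOf_pos α
    · rw [pow_orderOf_eq_one]; rfl
  set m := Nat.find hex with hmdef
  obtain ⟨hmpos, hmx⟩ := Nat.find_spec hex
  have hmin : ∀ t, 0 < t → t < m → (α ^ t) x ≠ x := by
    intro t ht htm h
    exact Nat.find_min hex htm ⟨ht, h⟩
  -- trace the cycle of δ through y
  have hδy : δ y = α x := by
    rw [hδγ]; rfl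
  have key : ∀ t, 1 ≤ t → t ≤ m → (δ ^ t) y = (α ^ t) x := by
    intro t
    induction t with
    | zero => omega
    | succ s ih =>
      intro _ hle
      rcases Nat.eq_zero_or_pos s with hs | hs
      · subst hs; simpa using hδy
      · have hsm : s < m := by omega
        have ihs := ih hs (by omega)
        have hnotS : (α ^ s) x ∉ S := fun h => hmin s hs hsm (horb s h)
        rw [pow_succ' δ s, pow_succ' α s, Perm.mul_apply δ, Perm.mul_apply α, ihs]
        exact hsame _ hnotS
  have hsc : δ.SameCycle y x := by
    refine ⟨(m : ℤ), ?_⟩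
    rw [zpow_natCast, key m hmpos le_rfl, hmx]
  have hysuppδ : y ∈ δ.support := by
    rw [Equiv.Perm.mem_support, hδy]
    intro h
    have hαx : α x ∈ c.support := by
      rw [← hcx]; exact Equiv.Perm.apply_mem_support.mpr hxc
    have : y ∈ c.support ∩ S := Finset.mem_inter.mpr ⟨h ▸ hαx, hy⟩
    rw [hcsing] at this
    exact hxy.symm (Finset.mem_singleton.mp this)
  set d : Perm (Fin n) := δ.cycleOf y with hddef
  have hdδ : d ∈ δ.cycleFactorsFinset :=
    Equiv.Perm.cycleOf_mem_cycleFactorsFinset_iff.mpr hysuppδ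
  have hyd : y ∈ d.support := by
    rw [hddef, Equiv.Perm.mem_support_cycleOf_iff]
    exact ⟨Equiv.Perm.SameCycle.refl δ y, hysuppδ⟩
  have hxd : x ∈ d.support := by
    rw [hddef, Equiv.Perm.mem_support_cycleOf_iff]
    exact ⟨hsc, hysuppδ⟩
  -- now the contradiction: d has ≥ 2 points of S while everything sums to ≤ 4
  have hd2 : 2 ≤ (d.support ∩ S).card := by
    rw [← Finset.card_pair hxy.symm]
    apply Finset.card_le_card
    intro z hz
    rcases Finset.mem_insert.mp hz with h | h
    · subst h; exact Finset.mem_inter.mpr ⟨hyd, hy⟩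
    · rw [Finset.mem_singleton] at h; subst h
      exact Finset.mem_inter.mpr ⟨hxd, hxS⟩
  have hlt : ∑ e ∈ δ.cycleFactorsFinset, 1 <
      ∑ e ∈ δ.cycleFactorsFinset, (e.support ∩ S).card :=
    Finset.sum_lt_sum (fun e he => Finset.card_pos.mpr (hmeetδ e he)) ⟨d, hdδ, by omega⟩
  have hle := hsumle δ
  simp only [Finset.sum_const, smul_eq_mul, mul_one] at hlt
  omega
end

section
/- Let α, β ∈ S_n with support of β contained in M(α) ∪ M(β⁻¹αβ), and suppose at most one point lies in M(β⁻¹αβ) but not in M(α). If there exists an involution ω with M(ω) ⊆ M(α), ω⁻¹αω = α⁻¹, and (ωβ)² fixing every point of M(α), then ω⁻¹βω = β⁻¹. -/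
/-!
Put `γ = (ωβ)²`. A point moved by `γ` lies outside `M(α)`, hence is fixed by `ω` and, being moved,
is moved by `β`; so `M(γ) ⊆ M(α^β) \ M(α)`, which has at most one point. No permutation moves
exactly one point, so `γ = 1`, i.e. `ωβω = β⁻¹`, and `ω⁻¹ = ω` since `ω` is an involution.
-/

open Equiv Finset

theorem inv_mul_mul_eq_inv_of_mul_self_eq_one {G : Type*} [Group G] {w b : G}
    (hw : w * w = 1) (hwb : w * b * (w * b) = 1) : w⁻¹ * b * w = b⁻¹ := by
  rw [inv_eq_of_mul_eq_one_left hw]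
  exact eq_inv_of_mul_eq_one_left (by simpa only [mul_assoc] using hwb)

namespace Equiv.Perm

variable {α : Type*} [DecidableEq α] [Fintype α]

theorem support_mul_self_subset_sdiff {w b : Perm α} {s t : Finset α}
    (hb : b.support ⊆ s ∪ t) (hw : w.support ⊆ s)
    (hfix : ∀ x ∈ s, (w * b * (w * b)) x = x) :
    (w * b * (w * b)).support ⊆ t \ s := by
  intro x hx
  have hxs : x ∉ s := fun h => mem_support.mp hx (hfix x h)
  have hxwb : x ∈ (w * b).support := by
    simpa only [sup_idem] using support_mul_le (w * b) (w * b) hx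
  have hxb : x ∈ b.support := by
    rcases mem_union.mp (support_mul_le w b hxwb) with hxw | hxb
    · exact absurd (hw hxw) hxs
    · exact hxb
  exact mem_sdiff.mpr ⟨(mem_union.mp (hb hxb)).resolve_left hxs, hxs⟩

end Equiv.Perm

theorem stmt_14_general {n : ℕ} (α β ω : Equiv.Perm (Fin n))
    (hβ : β.support ⊆ α.support ∪ (β⁻¹ * α * β).support)
    (hone : ((β⁻¹ * α * β).support \ α.support).card ≤ 1)
    (hinv : ω * ω = 1) (hsupp : ω.support ⊆ α.support)
    (hfix : ∀ x ∈ α.support, ((ω * β) * (ω * β)) x = x) :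
    ω⁻¹ * β * ω = β⁻¹ := by
  have hsq : ω * β * (ω * β) = 1 := Perm.card_support_le_one.mp <|
    (card_le_card (Perm.support_mul_self_subset_sdiff hβ hsupp hfix)).trans hone
  exact inv_mul_mul_eq_inv_of_mul_self_eq_one hinv hsq

/-- Lemma 4.2: M(β) ⊆ M(α) ∪ M(α^β), at most one point of M(α^β) is outside M(α),
ω an involution with M(ω) ⊆ M(α), α^ω = α⁻¹ and (ωβ)² fixing every point of M(α);
then β^ω = β⁻¹. -/
theorem stmt_14 {n : ℕ} (α β ω : Equiv.Perm (Fin n))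
    (hβ : β.support ⊆ α.support ∪ (β⁻¹ * α * β).support)
    (hone : ((β⁻¹ * α * β).support \ α.support).card ≤ 1)
    (hinv : ω * ω = 1) (hsupp : ω.support ⊆ α.support)
    (hα : ω⁻¹ * α * ω = α⁻¹)
    (hfix : ∀ x ∈ α.support, ((ω * β) * (ω * β)) x = x) :
    ω⁻¹ * β * ω = β⁻¹ :=
  stmt_14_general α β ω hβ hone hinv hsupp hfix
end

section
/- Let α be an r-cycle and β a permutation in S_n. If [α,β] moves exactly four points and all four of these are 'free points' (each lies in the support of exactly one of α⁻¹ and β⁻¹αβ), then r = 2. -/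
/-- Theorem 3.2 (i) (essential content): if α is a cycle, [α,β] moves exactly
four points and each of them is a free point between α⁻¹ and α^β (it lies in
the support of exactly one of α and β⁻¹αβ), then α is a transposition, i.e. r = 2. -/
theorem stmt_16 {n : ℕ} (α β : Equiv.Perm (Fin n)) (hα : α.IsCycle)
    (h4 : (α⁻¹ * β⁻¹ * α * β).support.card = 4)
    (hfree : ∀ x ∈ (α⁻¹ * β⁻¹ * α * β).support,
      (x ∈ α.support ∧ x ∉ (β⁻¹ * α * β).support) ∨
      (x ∈ (β⁻¹ * α * β).support ∧ x ∉ α.support)) :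
    α.support.card = 2 := by
  classical
  set α' : Equiv.Perm (Fin n) := β⁻¹ * α * β with hα'def
  set γ : Equiv.Perm (Fin n) := α⁻¹ * β⁻¹ * α * β with hγdef
  have hγapp : ∀ x, γ x = α⁻¹ (α' x) := by
    intro x
    simp [hγdef, hα'def, Equiv.Perm.mul_apply]
  set A := α.support with hA
  set B := α'.support with hB
  -- support of γ is the symmetric difference
  have hD : γ.support = (A \ B) ∪ (B \ A) := by
    ext x
    simp only [Finset.mem_union, Finset.mem_sdiff]
    constructor
    · intro hx
      rcases hfree x hx with ⟨h1, h2⟩ | ⟨h1, h2⟩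
      · exact Or.inl ⟨h1, h2⟩
      · exact Or.inr ⟨h1, h2⟩
    · rintro (⟨h1, h2⟩ | ⟨h1, h2⟩)
      · rw [Equiv.Perm.mem_support] at h1 ⊢
        rw [Equiv.Perm.notMem_support] at h2
        rw [hγapp, h2]
        intro h
        apply h1
        have := congrArg α h
        simpa using this.symm
      · rw [Equiv.Perm.mem_support] at h1 ⊢
        rw [Equiv.Perm.notMem_support] at h2
        rw [hγapp]
        intro h
        apply h1
        have := congrArg α h
        rw [Equiv.Perm.coe_inv, Equiv.apply_symm_apply, h2] at this
        exact this
  -- on A ∩ B, α' = α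
  have hagree : ∀ x, x ∈ A → x ∈ B → α' x = α x := by
    intro x hxA hxB
    have hxD : x ∉ γ.support := by
      rw [hD]
      simp [hxA, hxB]
    rw [Equiv.Perm.notMem_support, hγapp] at hxD
    have := congrArg α hxD
    simpa using this
  -- A ∩ B is invariant under α
  have hinv : ∀ x, x ∈ A ∩ B → α x ∈ A ∩ B := by
    intro x hx
    rw [Finset.mem_inter] at hx ⊢
    refine ⟨Equiv.Perm.apply_mem_support.mpr hx.1, ?_⟩
    rw [← hagree x hx.1 hx.2]
    exact Equiv.Perm.apply_mem_support.mpr hx.2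
  -- card B = card A
  have hcardAB : B.card = A.card := by
    have : α' = β⁻¹ * α * (β⁻¹)⁻¹ := by rw [inv_inv]
    rw [hB, this, Equiv.Perm.support_conj, Finset.card_map]
  have hsd1 : (A \ B).card + (A ∩ B).card = A.card := Finset.card_sdiff_add_card_inter A B
  have hsd2 : (B \ A).card + (B ∩ A).card = B.card := Finset.card_sdiff_add_card_inter B A
  have hintcomm : (B ∩ A).card = (A ∩ B).card := by rw [Finset.inter_comm]
  have hsum : (A \ B).card + (B \ A).card = 4 := by
    rw [hD] at h4
    rw [← h4]
    exact (Finset.card_union_of_disjoint (by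
      simp only [Finset.disjoint_left, Finset.mem_sdiff]
      rintro a ⟨h1, h2⟩ ⟨h3, h4⟩
      exact h4 h1)).symm
  have hABeq : (A \ B).card = (B \ A).card := by omega
  have hABcard : (A \ B).card = 2 := by omega
  -- A ∩ B is empty
  have hempty : A ∩ B = ∅ := by
    by_contra h
    obtain ⟨x, hx⟩ := Finset.nonempty_iff_ne_empty.mpr h
    obtain ⟨z, hz⟩ : (A \ B).Nonempty := by
      rw [← Finset.card_pos, hABcard]; norm_num
    rw [Finset.mem_sdiff] at hz
    have hxA := (Finset.mem_inter.mp hx).1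
    have hxmoved : α x ≠ x := Equiv.Perm.mem_support.mp hxA
    have hzmoved : α z ≠ z := Equiv.Perm.mem_support.mp hz.1
    obtain ⟨i, hi⟩ := hα.exists_pow_eq hxmoved hzmoved
    have hpow : ∀ j : ℕ, (α ^ j) x ∈ A ∩ B := by
      intro j
      induction j with
      | zero => simpa using hx
      | succ k ih =>
        have : (α ^ (k + 1)) x = α ((α ^ k) x) := by
          rw [pow_succ']
          simp [Equiv.Perm.mul_apply]
        rw [this]
        exact hinv _ ih
    have := hpow i
    rw [hi, Finset.mem_inter] at this
    exact hz.2 this.2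
  -- conclude
  have hcard0 : (A ∩ B).card = 0 := by rw [hempty]; rfl
  have : A.card = 2 := by omega
  exact this
end

section
/- Let α = α₁···α_k be a product of disjoint cycles in S_n whose lengths are pairwise distinct, and β ∈ S_n with |M(β) \ M(α)| ≤ 1. Suppose there exists an involution ω with M(ω) ⊆ M(α), ω⁻¹βω = β⁻¹, and ω⁻¹α_iω = α_i⁻¹ for all i. Then for every β' ∈ S_n with β'⁻¹αβ' = β⁻¹αβ, there exists a permutation γ with γ⁻¹β'γ = β'⁻¹ and γ⁻¹α_iγ = α_i⁻¹ for all i. -/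
/-!
Since `α^{β'} = α^β`, the permutation `z = β' β⁻¹` centralizes `α`; as the cycle lengths are
distinct, conjugation by `z` fixes every cycle `αᵢ`, so `z = π m` with `m` supported in `M(α)`
acting as a power of `αᵢ` on each `M(αᵢ)` (hence reversed by `ω`) and `π` supported in `Fix(α)`.
Then `β' = π m β`, and `γ = ω m⁻¹ π ρ` reverses `β'` and every `αᵢ` as soon as `ρ` reverses `π`
inside `M(π)` and fixes the point of `M(β) \ M(α)`, if any, so that `ρ` commutes with `β`.
-/

section Reverses

variable {G : Type*} [Group G]

def Reverses (γ g : G) : Prop := γ⁻¹ * g * γ = g⁻¹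

lemma Reverses.zpow {γ g : G} (h : Reverses γ g) (j : ℤ) : Reverses γ (g ^ j) := by
  have hconj := conj_zpow (a := γ⁻¹) (b := g) (i := j)
  rw [inv_inv, h, inv_zpow] at hconj
  exact hconj.symm

lemma Reverses.mul_left_of_commute {γ g c : G} (h : Reverses γ g) (hc : Commute c g) :
    Reverses (c * γ) g := by
  unfold Reverses at *
  rw [← h, show (c * γ)⁻¹ * g * (c * γ) = γ⁻¹ * (c⁻¹ * g * c) * γ by group,
    hc.inv_mul_cancel]

lemma Reverses.mul_right_of_commute {γ g c : G} (h : Reverses γ g) (hc : Commute c g) :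
    Reverses (γ * c) g := by
  unfold Reverses at *
  rw [show (γ * c)⁻¹ * g * (γ * c) = c⁻¹ * (γ⁻¹ * g * γ) * c by group, h,
    hc.inv_right.inv_mul_cancel]

lemma Reverses.mul_mul {γ₁ γ₂ g₁ g₂ : G} (h₁ : Reverses γ₁ g₁) (h₂ : Reverses γ₂ g₂)
    (hg : Commute g₁ g₂) (h₁₂ : Commute γ₁ g₂) (h₂₁ : Commute γ₂ g₁) :
    Reverses (γ₁ * γ₂) (g₁ * g₂) := by
  unfold Reverses at *
  calc (γ₁ * γ₂)⁻¹ * (g₁ * g₂) * (γ₁ * γ₂)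
      = γ₂⁻¹ * ((γ₁⁻¹ * g₁ * γ₁) * (γ₁⁻¹ * g₂ * γ₁)) * γ₂ := by group
    _ = (γ₂⁻¹ * g₁⁻¹ * γ₂) * (γ₂⁻¹ * g₂ * γ₂) := by rw [h₁, h₁₂.inv_mul_cancel]; group
    _ = (g₁ * g₂)⁻¹ := by rw [h₂₁.inv_right.inv_mul_cancel, h₂, mul_inv_rev, hg.inv_inv.eq]

lemma Reverses.mul_mul_of_commute {ω m π ρ β : G} (hωm : Reverses ω m) (hωβ : Reverses ω β)
    (hρπ : Reverses ρ π) (hωπ : Commute ω π) (hπm : Commute π m) (hρm : Commute ρ m)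
    (hρβ : Commute ρ β) :
    Reverses (ω * (m⁻¹ * π * ρ)) (π * m * β) := by
  unfold Reverses at *
  have hρ : Commute ρ (β⁻¹ * m⁻¹) := by
    simpa only [mul_inv_rev] using (hρm.mul_right hρβ).inv_right
  calc (ω * (m⁻¹ * π * ρ))⁻¹ * (π * m * β) * (ω * (m⁻¹ * π * ρ))
      = ρ⁻¹ * (π⁻¹ * m * (ω⁻¹ * π * ω) * (ω⁻¹ * m * ω) * (ω⁻¹ * β * ω) * m⁻¹ * π) * ρ := by
        group
    _ = ρ⁻¹ * (π⁻¹ * (m * π) * m⁻¹ * (β⁻¹ * m⁻¹) * π) * ρ := by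
        rw [hωπ.inv_mul_cancel, hωm, hωβ]; group
    _ = ρ⁻¹ * (β⁻¹ * m⁻¹) * ρ * (ρ⁻¹ * π * ρ) := by rw [← hπm.eq]; group
    _ = (π * m * β)⁻¹ := by rw [hρ.inv_mul_cancel, hρπ]; group

end Reverses

namespace Equiv.Perm

variable {X : Type*} [DecidableEq X] [Fintype X]

lemma commute_of_disjoint_support_of_subset {p q : Perm X} {A : Finset X}
    (hp : _root_.Disjoint p.support A) (hq : q.support ⊆ A) : Commute p q :=
  (disjoint_iff_disjoint_support.mpr (Finset.disjoint_of_subset_right hq hp)).commute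

lemma exists_reverses_support_subset (π : Perm X) :
    ∃ ρ : Perm X, Reverses ρ π ∧ ρ.support ⊆ π.support := by
  -- `π` is already conjugate to `π⁻¹` in the symmetric group on its own support.
  set π' : Perm {x // x ∈ π.support} := π.subtypePerm fun _ => apply_mem_support
  have hπ' : ofSubtype π' = π := ofSubtype_subtypePerm _ fun _ => mem_support.mpr
  obtain ⟨c, hc⟩ := isConj_iff.mp (isConj_iff_cycleType_eq.mpr (cycleType_inv π').symm)
  refine ⟨ofSubtype c⁻¹, ?_, ?_⟩
  · calc (ofSubtype c⁻¹)⁻¹ * π * ofSubtype c⁻¹ = ofSubtype (c * π' * c⁻¹) := by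
          rw [map_mul, map_mul, hπ', map_inv, inv_inv]
      _ = π⁻¹ := by rw [hc, map_inv, hπ']
  · exact fun x hx => ((mem_support_ofSubtype x _).mp hx).1

lemma IsCycle.exists_reverses_support_subset_apply_eq {c : Perm X} (hc : c.IsCycle) (x : X) :
    ∃ ρ : Perm X, Reverses ρ c ∧ ρ.support ⊆ c.support ∧ ρ x = x := by
  obtain ⟨ρ, hρ, hρc⟩ := exists_reverses_support_subset c
  by_cases hρx : ρ x = x
  · exact ⟨ρ, hρ, hρc, hρx⟩
  have hx : x ∈ ρ.support := mem_support.mpr hρx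
  obtain ⟨i, hi⟩ := hc.sameCycle (mem_support.mp (hρc (apply_mem_support.mpr hx)))
    (mem_support.mp (hρc hx))
  refine ⟨c ^ i * ρ, hρ.mul_left_of_commute (Commute.zpow_self c i), ?_, hi⟩
  exact (support_mul_le _ _).trans (sup_le (support_zpow_le c i) hρc)

lemma exists_reverses_support_subset_apply_eq (π : Perm X) (x : X) :
    ∃ ρ : Perm X, Reverses ρ π ∧ ρ.support ⊆ π.support ∧ ρ x = x := by
  induction π using cycle_induction_on with
  | base_one => exact ⟨1, by simp [Reverses], by simp, rfl⟩
  | base_cycles c hc => exact hc.exists_reverses_support_subset_apply_eq x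
  | induction_disjoint σ τ hστ _ hσ hτ =>
    obtain ⟨ρ₁, hρ₁, hρ₁σ, hρ₁x⟩ := hσ
    obtain ⟨ρ₂, hρ₂, hρ₂τ, hρ₂x⟩ := hτ
    have hστ' := disjoint_iff_disjoint_support.mp hστ
    refine ⟨ρ₁ * ρ₂, hρ₁.mul_mul hρ₂ hστ.commute ?_ ?_, ?_, by simp [hρ₁x, hρ₂x]⟩
    · exact commute_of_disjoint_support_of_subset
        (Finset.disjoint_of_subset_left hρ₁σ hστ') subset_rfl
    · exact commute_of_disjoint_support_of_subset
        (Finset.disjoint_of_subset_left hρ₂τ hστ'.symm) subset_rfl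
    · rw [hστ.support_mul]
      exact (support_mul_le _ _).trans (sup_le_sup hρ₁σ hρ₂τ)

lemma exists_reverses_commute_of_card_support_sdiff_le_one {π β : Perm X} {A : Finset X}
    (hπ : _root_.Disjoint π.support A) (hβ : (β.support \ A).card ≤ 1) :
    ∃ ρ : Perm X, Reverses ρ π ∧ ρ.support ⊆ π.support ∧ Commute ρ β := by
  obtain ⟨ρ, hρ, hρπ, hρfix⟩ : ∃ ρ : Perm X, Reverses ρ π ∧ ρ.support ⊆ π.support ∧
      ∀ x ∈ β.support \ A, ρ x = x := by
    rcases (β.support \ A).eq_empty_or_nonempty with hS | ⟨x, hx⟩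
    · obtain ⟨ρ, hρ, hρπ⟩ := exists_reverses_support_subset π
      exact ⟨ρ, hρ, hρπ, by simp [hS]⟩
    · obtain ⟨ρ, hρ, hρπ, hρx⟩ := exists_reverses_support_subset_apply_eq π x
      exact ⟨ρ, hρ, hρπ, fun y hy => Finset.card_le_one.mp hβ y hy x hx ▸ hρx⟩
  refine ⟨ρ, hρ, hρπ, (disjoint_iff_disjoint_support.mpr ?_).commute⟩
  refine Finset.disjoint_left.mpr fun y hyρ hyβ => mem_support.mp hyρ (hρfix y ?_)
  exact Finset.mem_sdiff.mpr ⟨hyβ, Finset.disjoint_left.mp hπ (hρπ hyρ)⟩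

lemma commute_of_commute_of_mem_cycleFactorsFinset {z σ c : Perm X} (hz : Commute z σ)
    (hc : c ∈ σ.cycleFactorsFinset)
    (huniq : ∀ d ∈ σ.cycleFactorsFinset, d.support.card = c.support.card → d = c) :
    Commute z c := by
  have hmem : z * c * z⁻¹ ∈ σ.cycleFactorsFinset := by
    simpa only [hz.mul_inv_cancel] using (mem_cycleFactorsFinset_conj σ z c).mpr hc
  exact mul_inv_eq_iff_eq_mul.mp (huniq _ hmem (by rw [support_conj, Finset.card_map]))

lemma IsCycle.conj_apply_eq_inv_apply {c g ω : Perm X} (hc : c.IsCycle) (hg : Commute g c)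
    (hω : Reverses ω c) {y : X} (hy : y ∈ c.support) : (ω⁻¹ * g * ω) y = g⁻¹ y := by
  obtain ⟨hgc, j, hj⟩ := hc.commute_iff.mp hg
  have hpow : ∀ x ∈ c.support, g x = (c ^ j) x := fun x hx => by
    rw [show c ^ j = _ from hj, ofSubtype_subtypePerm_of_mem hgc hx]
  have hωy : ω y ∈ c.support := by
    have h : ω⁻¹ (c (ω y)) = c⁻¹ y := congrArg (· y) hω
    rw [inv_eq_iff_eq] at h
    refine mem_support.mpr fun hfix => mem_support.mp hy ?_
    rw [hfix, EmbeddingLike.apply_eq_iff_eq, eq_comm, inv_eq_iff_eq] at h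
    exact h.symm
  calc (ω⁻¹ * g * ω) y = (ω⁻¹ * c ^ j * ω) y := by simp only [mul_apply, hpow _ hωy]
    _ = (c ^ j)⁻¹ y := by rw [hω.zpow j]
    _ = g⁻¹ y := by
      rw [eq_inv_iff_eq, ← zpow_neg, hpow _ (zpow_apply_mem_support.mpr hy), zpow_neg]
      exact (c ^ j).apply_symm_apply y

lemma reverses_of_forall_mem_cycleFactorsFinset {σ g ω : Perm X}
    (hg : ∀ c ∈ σ.cycleFactorsFinset, Commute g c) (hω : ∀ c ∈ σ.cycleFactorsFinset, Reverses ω c)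
    (hgσ : g.support ⊆ σ.support) (hωσ : ω.support ⊆ σ.support) : Reverses ω g := by
  unfold Reverses
  ext y
  by_cases hy : y ∈ σ.support
  · have hc := cycleOf_mem_cycleFactorsFinset_iff.mpr hy
    exact (mem_cycleFactorsFinset_iff.mp hc).1.conj_apply_eq_inv_apply (hg _ hc) (hω _ hc)
      (mem_support_cycleOf_iff.mpr ⟨SameCycle.refl _ _, hy⟩)
  · have hωy : ω y = y := notMem_support.mp fun h => hy (hωσ h)
    have hgy : g y = y := notMem_support.mp fun h => hy (hgσ h)
    rw [mul_apply, mul_apply, hωy, hgy, inv_eq_iff_eq.mpr hωy.symm, inv_eq_iff_eq.mpr hgy.symm]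

lemma exists_mul_eq_of_commute {z σ : Perm X} (hz : Commute z σ) :
    ∃ π m : Perm X, z = π * m ∧ _root_.Disjoint π.support σ.support ∧ m.support ⊆ σ.support := by
  have hzσ : ∀ x, z x ∉ σ.support ↔ x ∉ σ.support := fun x =>
    not_congr (mem_support_iff_of_commute hz x)
  let π : Perm X := ofSubtype (z.subtypePerm hzσ : Perm {x // x ∉ σ.support})
  refine ⟨π, π⁻¹ * z, (mul_inv_cancel_left π z).symm,
    Finset.disjoint_left.mpr fun x hx => ((mem_support_ofSubtype x _).mp hx).1, fun x hx => ?_⟩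
  by_contra hxσ
  refine mem_support.mp hx ?_
  rw [mul_apply, inv_eq_iff_eq]
  exact (ofSubtype_subtypePerm_of_mem (p := (· ∉ σ.support)) hzσ hxσ).symm

lemma mem_cycleFactorsFinset_prod_ofFn_iff {k : ℕ} {a : Fin k → Perm X}
    (hcyc : ∀ i, (a i).IsCycle) (hdisj : ∀ i j, i ≠ j → (a i).Disjoint (a j)) {c : Perm X} :
    c ∈ (List.ofFn a).prod.cycleFactorsFinset ↔ ∃ i, a i = c := by
  have hinj : Function.Injective a := fun i j hij => by
    by_contra hne
    exact (hcyc j).ne_one (disjoint_refl_iff.mp (hij ▸ hdisj i j hne))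
  have hfac := (cycleFactorsFinset_eq_list_toFinset (List.nodup_ofFn.mpr hinj)).mpr
    ⟨fun f hf => by obtain ⟨i, rfl⟩ := List.mem_ofFn.mp hf; exact hcyc i,
      List.pairwise_ofFn.mpr fun i j hij => hdisj i j hij.ne, rfl⟩
  rw [hfac, List.mem_toFinset, List.mem_ofFn]

end Equiv.Perm

open Equiv Perm

theorem stmt_17_general {n k : ℕ} (a : Fin k → Equiv.Perm (Fin n))
    (hcyc : ∀ i, (a i).IsCycle)
    (hdisj : ∀ i j, i ≠ j → (a i).Disjoint (a j))
    (hlen : ∀ i j, i ≠ j → (a i).support.card ≠ (a j).support.card)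
    (α β : Equiv.Perm (Fin n)) (hα : α = (List.ofFn a).prod)
    (hβ : (β.support \ α.support).card ≤ 1)
    (ω : Equiv.Perm (Fin n)) (hsupp : ω.support ⊆ α.support)
    (hωβ : ω⁻¹ * β * ω = β⁻¹) (hωa : ∀ i, ω⁻¹ * (a i) * ω = (a i)⁻¹) :
    ∀ β' : Equiv.Perm (Fin n), β'⁻¹ * α * β' = β⁻¹ * α * β →
      ∃ γ : Equiv.Perm (Fin n), γ⁻¹ * β' * γ = β'⁻¹ ∧
        ∀ i, γ⁻¹ * (a i) * γ = (a i)⁻¹ := by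
  intro β' hβ'
  have hfac : ∀ {c}, c ∈ α.cycleFactorsFinset ↔ ∃ i, a i = c := by
    subst hα; exact mem_cycleFactorsFinset_prod_ofFn_iff hcyc hdisj
  have hmem : ∀ i, a i ∈ α.cycleFactorsFinset := fun i => hfac.mpr ⟨i, rfl⟩
  have hz : Commute (β' * β⁻¹) α := by
    calc β' * β⁻¹ * α = β' * (β⁻¹ * α * β) * β⁻¹ := by group
      _ = α * (β' * β⁻¹) := by rw [← hβ']; group
  have hza : ∀ i, Commute (β' * β⁻¹) (a i) := fun i =>
    commute_of_commute_of_mem_cycleFactorsFinset hz (hmem i) fun d hd hcard => by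
      obtain ⟨j, rfl⟩ := hfac.mp hd
      exact congrArg a (not_imp_not.mp (hlen j i) hcard)
  obtain ⟨π, m, hzπm, hπα, hmα⟩ := exists_mul_eq_of_commute hz
  have hπ {p : Perm (Fin n)} (hp : p.support ⊆ α.support) : Commute π p :=
    commute_of_disjoint_support_of_subset hπα hp
  have hma : ∀ i, Commute m (a i) := fun i => by
    rw [eq_inv_mul_of_mul_eq hzπm.symm]
    exact (hπ (mem_cycleFactorsFinset_support_le (hmem i))).inv_left.mul_left (hza i)
  have hωm : Reverses ω m := reverses_of_forall_mem_cycleFactorsFinset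
    (fun c hc => by obtain ⟨i, rfl⟩ := hfac.mp hc; exact hma i)
    (fun c hc => by obtain ⟨i, rfl⟩ := hfac.mp hc; exact hωa i) hmα hsupp
  obtain ⟨ρ, hρπ, hρsupp, hρβ⟩ := exists_reverses_commute_of_card_support_sdiff_le_one hπα hβ
  have hρ {p : Perm (Fin n)} (hp : p.support ⊆ α.support) : Commute ρ p :=
    commute_of_disjoint_support_of_subset (Finset.disjoint_of_subset_left hρsupp hπα) hp
  refine ⟨ω * (m⁻¹ * π * ρ), ?_, fun i => ?_⟩
  · rw [show β' = π * m * β by rw [← hzπm]; group]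
    exact Reverses.mul_mul_of_commute hωm hωβ hρπ (hπ hsupp).symm (hπ hmα) (hρ hmα) hρβ
  · have hai := mem_cycleFactorsFinset_support_le (hmem i)
    exact Reverses.mul_right_of_commute (hωa i)
      (((hma i).inv_left.mul_left (hπ hai)).mul_left (hρ hai))

/-- Lemma 4.1 (i): α a product of disjoint cycles of pairwise distinct lengths,
|M(β) \ M(α)| ≤ 1, and ω an involution supported in M(α) inverting β and every
cycle factor of α by conjugation.  Then every β' with α^{β'} = α^β is inverted,
together with all the cycle factors of α, by some γ. -/
theorem stmt_17 {n k : ℕ} (a : Fin k → Equiv.Perm (Fin n))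
    (hcyc : ∀ i, (a i).IsCycle)
    (hdisj : ∀ i j, i ≠ j → (a i).Disjoint (a j))
    (hlen : ∀ i j, i ≠ j → (a i).support.card ≠ (a j).support.card)
    (α β : Equiv.Perm (Fin n)) (hα : α = (List.ofFn a).prod)
    (hβ : (β.support \ α.support).card ≤ 1)
    (ω : Equiv.Perm (Fin n)) (hinv : ω * ω = 1) (hsupp : ω.support ⊆ α.support)
    (hωβ : ω⁻¹ * β * ω = β⁻¹) (hωa : ∀ i, ω⁻¹ * (a i) * ω = (a i)⁻¹) :
    ∀ β' : Equiv.Perm (Fin n), β'⁻¹ * α * β' = β⁻¹ * α * β →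
      ∃ γ : Equiv.Perm (Fin n), γ⁻¹ * β' * γ = β'⁻¹ ∧
        ∀ i, γ⁻¹ * (a i) * γ = (a i)⁻¹ :=
  stmt_17_general a hcyc hdisj hlen α β hα hβ ω hsupp hωβ hωa
end
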